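/- arXiv:1308.6611 — 6 statements merged into one kernel-verified Lean document; each statement's English description precedes it below -/
import Mathlib

section
/- Let S = [[-1, δ],[0, 1]] and T = [[1, 0],[δ, -1]] be the 2×2 matrices over k giving the action of the two simple reflections of the dihedral realization on the span of the simple roots. Then for every m ≥ 1, (S·T)^m is the identity matrix if and only if [2m] = 0 and [2m−1] = −1 in k. -/
/-- The quantum numbers `[n] ∈ k` attached to `δ ∈ k`:
`[0] = 0`, `[1] = 1`, `[n+1] = δ·[n] − [n−1]`. -/
def qn {k : Type*} [CommRing k] (δ : k) : ℕ → k
  | 0 => 0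
  | 1 => 1
  | n + 2 => δ * qn δ (n + 1) - qn δ n

/-! Since `S·T = [[δ² - 1, -δ], [δ, -1]] = [[[3], -[2]], [[2], -[1]]]` and right multiplication by
`S·T` shifts the quantum numbers in `[[[n+2], -[n+1]], [[n+1], -[n]]]` by two, the entries of
`(S·T)^m` are `±[2m+1], ±[2m], ±[2m-1]`. Such a matrix is the identity as soon as `[2m] = 0` and
`[2m-1] = -1`, because then `[2m+1] = δ·[2m] - [2m-1] = 1`. -/

lemma Matrix.fin_two_eq_one_iff {α : Type*} [Zero α] [One α] (a b c d : α) :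
    !![a, b; c, d] = 1 ↔ a = 1 ∧ b = 0 ∧ c = 0 ∧ d = 1 := by
  simp only [Matrix.one_fin_two, EmbeddingLike.apply_eq_iff_eq, Matrix.vecCons_inj, and_true,
    and_assoc]

namespace qn

variable {k : Type*} [CommRing k] (δ : k)

lemma add_two (n : ℕ) : qn δ (n + 2) = δ * qn δ (n + 1) - qn δ n := rfl

def matrix (n : ℕ) : Matrix (Fin 2) (Fin 2) k :=
  !![qn δ (n + 2), -qn δ (n + 1); qn δ (n + 1), -qn δ n]

lemma ST_eq_matrix_one :
    (!![-1, δ; 0, 1] : Matrix (Fin 2) (Fin 2) k) * !![1, 0; δ, -1] = qn.matrix δ 1 := by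
  rw [qn.matrix, add_two δ 1, add_two δ 0, qn.eq_1, qn.eq_2]
  simp only [Matrix.mul_fin_two, EmbeddingLike.apply_eq_iff_eq, Matrix.vecCons_inj, and_true]
  refine ⟨⟨?_, ?_⟩, ?_, ?_⟩ <;> ring

lemma matrix_mul_ST (n : ℕ) :
    qn.matrix δ n * ((!![-1, δ; 0, 1] : Matrix (Fin 2) (Fin 2) k) * !![1, 0; δ, -1]) =
      qn.matrix δ (n + 2) := by
  rw [qn.matrix, qn.matrix, add_two δ (n + 2), add_two δ (n + 1), add_two δ n]
  simp only [Matrix.mul_fin_two, EmbeddingLike.apply_eq_iff_eq, Matrix.vecCons_inj, and_true]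
  refine ⟨⟨?_, ?_⟩, ?_, ?_⟩ <;> ring

lemma ST_pow_succ (n : ℕ) :
    ((!![-1, δ; 0, 1] : Matrix (Fin 2) (Fin 2) k) * !![1, 0; δ, -1]) ^ (n + 1) =
      qn.matrix δ (2 * n + 1) := by
  induction n with
  | zero => exact (pow_one _).trans (ST_eq_matrix_one δ)
  | succ n ih => rw [pow_succ, ih, matrix_mul_ST]; rfl

lemma matrix_eq_one_iff (n : ℕ) : qn.matrix δ n = 1 ↔ qn δ (n + 1) = 0 ∧ qn δ n = -1 := by
  rw [qn.matrix, Matrix.fin_two_eq_one_iff, neg_eq_zero, neg_eq_iff_eq_neg, add_two]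
  constructor
  · rintro ⟨-, h₁, -, h₀⟩
    exact ⟨h₁, h₀⟩
  · rintro ⟨h₁, h₀⟩
    exact ⟨by rw [h₁, h₀]; ring, h₁, h₁, h₀⟩

end qn

/-- For the symmetric dihedral realization with Cartan entries `a(s,t) = a(t,s) = −δ`,
acting on the span of the simple roots with matrices
`S = [[-1, δ],[0, 1]]` and `T = [[1, 0],[δ, -1]]`, and for every `m ≥ 1`:
`(S·T)^m` is the identity matrix if and only if `[2m] = 0` and `[2m−1] = −1` in `k`. -/
theorem dihedral_ST_pow_eq_one_iff {k : Type*} [CommRing k] (δ : k) (m : ℕ) (hm : 1 ≤ m) :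
    ((!![-1, δ; 0, 1] : Matrix (Fin 2) (Fin 2) k) * !![1, 0; δ, -1]) ^ m = 1 ↔
      (qn δ (2 * m) = 0 ∧ qn δ (2 * m - 1) = -1) := by
  obtain ⟨n, rfl⟩ := Nat.exists_eq_add_of_le' hm
  rw [qn.ST_pow_succ, qn.matrix_eq_one_iff, show 2 * (n + 1) - 1 = 2 * n + 1 by omega]
  rfl
end

section
/- Let M be the free k-module with basis (es, et, eu), and let σs, σt be the k-linear endomorphisms of M determined by σs(es) = −es, σs(et) = et + δ·es, σs(eu) = eu − a·es, σt(et) = −et, σt(es) = es + δ·et, σt(eu) = eu − b·et, where a, b ∈ k are arbitrary (they play the role of the Cartan entries a(s,u) and a(t,u), up to sign). Then for every n ≥ 0, (σs ∘ σt)^n (eu) = eu − ([n]²·a + [n]·[n+1]·b)·es − ([n]·[n−1]·a + [n]²·b)·et. -/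
/-- The endomorphism `σs` of the free module `k³` with basis `(es, et, eu)`,
determined by `σs(es) = −es`, `σs(et) = et + δ·es`, `σs(eu) = eu − a·es`
(given by the matrix whose columns are the images of the basis vectors). -/
noncomputable def sigmaS {k : Type*} [CommRing k] (δ a : k) :
    (Fin 3 → k) →ₗ[k] (Fin 3 → k) :=
  Matrix.toLin' !![-1, δ, -a; 0, 1, 0; 0, 0, 1]

/-- The endomorphism `σt` of the free module `k³` with basis `(es, et, eu)`,
determined by `σt(et) = −et`, `σt(es) = es + δ·et`, `σt(eu) = eu − b·et`. -/
noncomputable def sigmaT {k : Type*} [CommRing k] (δ b : k) :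
    (Fin 3 → k) →ₗ[k] (Fin 3 → k) :=
  Matrix.toLin' !![1, 0, 0; δ, -1, -b; 0, 0, 1]


lemma vec_helper {k : Type*} [CommRing k] (c1 c2 : k) :
    ![0, 0, (1:k)] - c1 • ![1, 0, 0] - c2 • ![0, 1, 0] = ![-c1, -c2, 1] := by
  funext i; fin_cases i <;> simp

lemma step_apply {k : Type*} [CommRing k] (δ a b p q r : k) :
    (sigmaS δ a ∘ₗ sigmaT δ b) ![p, q, r] =
      ![(δ^2 - 1) * p - δ * q + (-δ*b - a) * r, δ * p - q - b * r, r] := by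
  funext i
  fin_cases i <;>
    simp [sigmaS, sigmaT, Matrix.toLin'_apply, Matrix.mulVec, dotProduct,
      Fin.sum_univ_succ] <;> ring

lemma catalan_qn {k : Type*} [CommRing k] (δ : k) (n : ℕ) :
    qn δ (n+1) ^ 2 - δ * qn δ n * qn δ (n+1) + qn δ n ^ 2 = 1 := by
  induction n with
  | zero => simp [qn]
  | succ m ih =>
      have : qn δ (m+2) = δ * qn δ (m+1) - qn δ m := rfl
      rw [this]; linear_combination ih

/-- The action of `(st)^n` on a third simple root:
`(σs ∘ σt)^n (eu) = eu − ([n]²·a + [n]·[n+1]·b)·es − ([n]·[n−1]·a + [n]²·b)·et`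
for every `n ≥ 0`. -/
theorem dihedral_st_pow_third_root {k : Type*} [CommRing k] (δ a b : k) (n : ℕ) :
    ((sigmaS δ a ∘ₗ sigmaT δ b) ^ n) ![0, 0, (1 : k)] =
      ![0, 0, (1 : k)]
        - (qn δ n ^ 2 * a + qn δ n * qn δ (n + 1) * b) • ![1, 0, (0 : k)]
        - (qn δ n * qn δ (n - 1) * a + qn δ n ^ 2 * b) • ![0, 1, (0 : k)] := by
  induction n with
  | zero => simp [qn]
  | succ m ih =>
      rw [pow_succ', Module.End.mul_apply, ih, vec_helper, step_apply, vec_helper]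
      rcases m with _ | m
      · funext i; fin_cases i <;> simp [qn] <;> ring
      · have h3 : qn δ (m+3) = δ * qn δ (m+2) - qn δ (m+1) := rfl
        have h2 : qn δ (m+2) = δ * qn δ (m+1) - qn δ m := rfl
        have hcat := catalan_qn δ m
        funext i
        fin_cases i
        · simp only [Nat.add_sub_cancel, h3, h2, Fin.mk_zero, Fin.mk_one,
            Matrix.cons_val_zero, Matrix.cons_val_one, Matrix.head_cons]
          linear_combination (a + δ*b) * hcat
        · simp only [Nat.add_sub_cancel, h3, h2, Fin.mk_zero, Fin.mk_one,
            Matrix.cons_val_zero, Matrix.cons_val_one, Matrix.head_cons]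
          linear_combination b * hcat
        · rfl
end

section
/- There exist unique k-linear maps Ds, Dt : R → R satisfying αs·Ds(f) = f − σs(f) and αt·Dt(f) = f − σt(f) for all f ∈ R (the simple Demazure operators). Moreover, suppose m ≥ 2 and [m] = 0 in k. If m is even, then the two alternating compositions of length m agree: Ds ∘ Dt ∘ ⋯ ∘ Dt = Dt ∘ Ds ∘ ⋯ ∘ Ds (m factors each). If m is odd, then Ds ∘ Dt ∘ ⋯ ∘ Ds = [m−1] · (Dt ∘ Ds ∘ ⋯ ∘ Dt) (m factors each); in particular the braid relation for Demazure operators holds on the nose in the balanced case [m−1] = 1. -/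
open MvPolynomial

/-- The involution `σs` of `R = k[αs, αt]` (with `αs = X 0`, `αt = X 1`) determined by
`σs(αs) = −αs`, `σs(αt) = αt + δ·αs`. -/
noncomputable def σs {k : Type*} [CommRing k] (δ : k) :
    MvPolynomial (Fin 2) k →ₐ[k] MvPolynomial (Fin 2) k :=
  aeval ![-(X 0), X 1 + C δ * X 0]

/-- The involution `σt` of `R = k[αs, αt]` determined by
`σt(αt) = −αt`, `σt(αs) = αs + δ·αt`. -/
noncomputable def σt {k : Type*} [CommRing k] (δ : k) :
    MvPolynomial (Fin 2) k →ₐ[k] MvPolynomial (Fin 2) k :=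
  aeval ![X 0 + C δ * X 1, -(X 1)]

/-- The alternating composition `A ∘ B ∘ A ∘ ⋯` with `n` factors,
the leftmost factor being `A`. -/
def altComp {k M : Type*} [CommRing k] [AddCommGroup M] [Module k M] :
    (M →ₗ[k] M) → (M →ₗ[k] M) → ℕ → (M →ₗ[k] M)
  | _, _, 0 => LinearMap.id
  | A, B, n + 1 => A ∘ₗ altComp B A n

/-!
Write `P n = Ds ∘ Dt ∘ ⋯` and `Q n = Dt ∘ Ds ∘ ⋯` (`n` factors). For a linear form `λ`, the twisted
Leibniz rule `Ds (λ p) = Ds(λ) p + σs(λ) Ds p`, together with `Ds ∘ Ds = 0`, gives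
`P (m+2) (λ p) = w(λ) P (m+2) p + a Q (m+1) p + b P (m+1) p`, where `w = s t s ⋯` and the scalars
`a, b` are explicit in quantum numbers. Since `R` is generated by `αs, αt`, a `k`-linear map `T`
with `T 1 = 0` and `T (λ p) ∈ R · T p` vanishes. For `T = μ P (m+2) - μ[m+1] Q (m+2)` with
`μ [m+2] = 0` the two words act alike on linear forms and the lower terms cancel by
`[m+1]² = 1 + [m][m+2]`, so `T = 0` (the odd relation, valid for every `m`). Exchanging `s` and `t`
and composing with `Ds`, which kills the image of `P (m+2)`, gives `μ P (m+3) = 0`. For `m = 2j+2`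
the defect `μ([2j+1] - 1)` annihilates `[j+1]`, hence kills `Q m`, which gives the even relation.
-/

section QuantumNumbers

variable {k : Type*} [CommRing k] (δ : k)

theorem qn_add_two (n : ℕ) : qn δ (n + 2) = δ * qn δ (n + 1) - qn δ n := rfl

theorem qn_add_add_one (a b : ℕ) :
    qn δ (a + b + 1) = qn δ (a + 1) * qn δ (b + 1) - qn δ a * qn δ b := by
  induction b using Nat.twoStepInduction with
  | zero => simp [qn]
  | one => simp [qn]; ring
  | more b ih₀ ih₁ =>
    have h := qn_add_two δ (a + b + 1)
    rw [show a + b + 1 + 2 = a + (b + 2) + 1 by omega,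
      show a + b + 1 + 1 = a + (b + 1) + 1 by omega] at h
    linear_combination h + δ * ih₁ - ih₀ - qn δ (a + 1) * qn_add_two δ (b + 1)
      + qn δ a * qn_add_two δ b

theorem qn_add_one_sq (n : ℕ) : qn δ (n + 1) ^ 2 = 1 + qn δ n * qn δ (n + 2) := by
  induction n with
  | zero => simp [qn]
  | succ n ih =>
    linear_combination ih - qn δ (n + 1) * qn_add_two δ (n + 1) + qn δ (n + 2) * qn_add_two δ n

theorem qn_add_one_mul_qn_two_mul_add_one_sub_one (j : ℕ) :
    qn δ (j + 1) * (qn δ (2 * j + 1) - 1) = qn δ j * qn δ (2 * j + 2) := by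
  have hodd := qn_add_add_one δ j j
  have heven := qn_add_add_one δ (j + 1) j
  rw [show j + j + 1 = 2 * j + 1 by omega] at hodd
  rw [show j + 1 + j + 1 = 2 * j + 2 by omega] at heven
  linear_combination qn δ (j + 1) * hodd - qn δ j * heven + qn δ (j + 1) * qn_add_one_sq δ j

end QuantumNumbers

section Generation

variable {k A : Type*} [CommRing k] [CommRing A] [Algebra k A] {s : Set A}

theorem Submodule.eq_top_of_one_mem_of_mul_mem (hs : Algebra.adjoin k s = ⊤)
    (N : Submodule k A) (h1 : 1 ∈ N) (hmul : ∀ a ∈ s, ∀ p ∈ N, a * p ∈ N) : N = ⊤ := by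
  have key : ∀ a : A, ∀ p ∈ N, a * p ∈ N := fun a ↦ by
    induction (hs ▸ Algebra.mem_top : a ∈ Algebra.adjoin k s) using Algebra.adjoin_induction with
    | mem a ha => exact hmul a ha
    | algebraMap r => exact fun p hp ↦ Algebra.smul_def r p ▸ N.smul_mem r hp
    | add a b _ _ ha hb => exact fun p hp ↦ (add_mul a b p).symm ▸ N.add_mem (ha p hp) (hb p hp)
    | mul a b _ _ ha hb => exact fun p hp ↦ (mul_assoc a b p).symm ▸ ha _ (hb p hp)
  exact eq_top_iff.2 fun a _ ↦ mul_one a ▸ key a 1 h1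

theorem dvd_sub_apply_of_adjoin_eq_top (hs : Algebra.adjoin k s = ⊤) (σ : A →ₐ[k] A) {x : A}
    (h : ∀ a ∈ s, x ∣ a - σ a) (f : A) : x ∣ f - σ f := by
  induction (hs ▸ Algebra.mem_top : f ∈ Algebra.adjoin k s) using Algebra.adjoin_induction with
  | mem a ha => exact h a ha
  | algebraMap r => simp
  | add a b _ _ ha hb => rw [map_add, add_sub_add_comm]; exact dvd_add ha hb
  | mul a b _ _ ha hb =>
    rw [map_mul, show a * b - σ a * σ b = (a - σ a) * b + σ a * (b - σ b) by ring]
    exact dvd_add (dvd_mul_of_dvd_left ha b) (dvd_mul_of_dvd_right hb _)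

theorem existsUnique_linearMap_mul_eq {x : A} (hx : IsLeftRegular x) (g : A →ₗ[k] A)
    (hg : ∀ f, x ∣ g f) :
    ∃! D : A →ₗ[k] A, ∀ f, x * D f = g f := by
  let mulX : A ≃ₗ[k] LinearMap.range (LinearMap.mulLeft k x) := LinearEquiv.ofInjective _ hx
  have hD₀ : ∀ f, x * (mulX.symm ⟨g f, _⟩ : A) = g f := fun f ↦
    congrArg Subtype.val (mulX.apply_symm_apply ⟨g f, (hg f).elim fun d hd ↦ ⟨d, hd.symm⟩⟩)
  refine ⟨mulX.symm.toLinearMap ∘ₗ g.codRestrict _ _, hD₀, fun D hD ↦ ?_⟩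
  ext f
  exact hx ((hD f).trans (hD₀ f).symm)

end Generation

/-- The dihedral setting axiomatized over an algebra `A` generated by `x = αs` and `y = αt`,
so that exchanging `s` and `t` is an operation on the data (`swap`). -/
structure DemazurePair (k A : Type*) [CommRing k] [CommRing A] [Algebra k A] (δ : k) where
  x : A
  y : A
  σ : A →ₐ[k] A
  τ : A →ₐ[k] A
  D : A →ₗ[k] A
  E : A →ₗ[k] A
  adjoin_eq_top : Algebra.adjoin k {x, y} = ⊤
  isLeftRegular_x : IsLeftRegular x
  isLeftRegular_y : IsLeftRegular y
  σ_x : σ x = -x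
  σ_y : σ y = y + algebraMap k A δ * x
  τ_y : τ y = -y
  τ_x : τ x = x + algebraMap k A δ * y
  x_mul_D : ∀ f, x * D f = f - σ f
  y_mul_E : ∀ f, y * E f = f - τ f

namespace DemazurePair

section Coefficients

variable {k : Type*} [CommRing k] (δ : k)

/-! A pair `v : k × k` stands for the linear form `lin v = v.1 x + v.2 y`, and `Prod.swap`
corresponds to `DemazurePair.swap`. `σ` and `D` act on linear forms through `reflCoeff` and
`pairing`; `lin (rootCoeff δ n u)` is the image of `lin (Prod.swap^[n + 1] u)` under the word
`σ τ σ ⋯` with `n + 1` letters. -/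

def reflCoeff (v : k × k) : k × k := (δ * v.2 - v.1, v.2)

def pairing (v : k × k) : k := 2 * v.1 - δ * v.2

def rootCoeff (n : ℕ) (u : k × k) : k × k :=
  (qn δ (n + 2) * u.1 - qn δ (n + 1) * u.2, qn δ (n + 1) * u.1 - qn δ n * u.2)

variable {δ}

theorem reflCoeff_swap (u : k × k) : reflCoeff δ u.swap = rootCoeff δ 0 u := by
  simp [reflCoeff, rootCoeff, qn]

theorem reflCoeff_rootCoeff_swap (n : ℕ) (u : k × k) :
    reflCoeff δ (rootCoeff δ n u).swap = rootCoeff δ (n + 1) u := by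
  refine Prod.ext ?_ rfl
  simp only [reflCoeff, rootCoeff, Prod.fst_swap, Prod.snd_swap]
  linear_combination -u.1 * qn_add_two δ (n + 1) + u.2 * qn_add_two δ n

theorem smul_rootCoeff_swap_swap {μ : k} {n : ℕ} (hμ : μ * qn δ (n + 1) = 0) (u : k × k) :
    μ • (rootCoeff δ n u.swap).swap = μ • rootCoeff δ n u := by
  simp only [rootCoeff, Prod.fst_swap, Prod.snd_swap, Prod.swap_prod_mk, Prod.smul_mk,
    smul_eq_mul, Prod.mk.injEq]
  constructor
  · linear_combination (2 * u.2 - δ * u.1) * hμ - μ * u.1 * qn_add_two δ n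
  · linear_combination (δ * u.2 - 2 * u.1) * hμ + μ * u.2 * qn_add_two δ n

theorem mul_pairing_rootCoeff_swap {μ : k} {n : ℕ} (hμ : μ * qn δ (n + 2) = 0) (u : k × k) :
    μ * pairing δ (rootCoeff δ n u).swap = μ * qn δ (n + 1) * pairing δ u := by
  simp only [pairing, rootCoeff, Prod.fst_swap, Prod.snd_swap]
  linear_combination (2 * u.2 - δ * u.1) * hμ - 2 * μ * u.2 * qn_add_two δ n

end Coefficients

variable {k A : Type*} [CommRing k] [CommRing A] [Algebra k A] {δ : k}

section Basic

variable (c : DemazurePair k A δ)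

def swap : DemazurePair k A δ where
  x := c.y
  y := c.x
  σ := c.τ
  τ := c.σ
  D := c.E
  E := c.D
  adjoin_eq_top := Set.pair_comm c.x c.y ▸ c.adjoin_eq_top
  isLeftRegular_x := c.isLeftRegular_y
  isLeftRegular_y := c.isLeftRegular_x
  σ_x := c.τ_y
  σ_y := c.τ_x
  τ_y := c.σ_x
  τ_x := c.σ_y
  x_mul_D := c.y_mul_E
  y_mul_E := c.x_mul_D

theorem swap_swap : c.swap.swap = c := rfl

def P (n : ℕ) : A →ₗ[k] A := altComp c.D c.E n

def lin (v : k × k) : A := algebraMap k A v.1 * c.x + algebraMap k A v.2 * c.y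

theorem swap_lin (v : k × k) : c.swap.lin v = c.lin v.swap := add_comm _ _

theorem lin_eq_swap_lin (v : k × k) : c.lin v = c.swap.lin v.swap := by
  rw [swap_lin, Prod.swap_swap]

theorem lin_smul (a : k) (v : k × k) : c.lin (a • v) = algebraMap k A a * c.lin v := by
  simp only [lin, Prod.smul_fst, Prod.smul_snd, smul_eq_mul, map_mul]
  ring

theorem σ_σ (f : A) : c.σ (c.σ f) = f := by
  have : c.σ.comp c.σ = AlgHom.id k A := by
    refine AlgHom.ext_of_adjoin_eq_top c.adjoin_eq_top ?_
    rintro a (rfl | rfl) <;> simp [c.σ_x, c.σ_y]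
  exact AlgHom.congr_fun this f

theorem σ_lin (v : k × k) : c.σ (c.lin v) = c.lin (reflCoeff δ v) := by
  simp only [lin, reflCoeff, map_add, map_mul, AlgHom.commutes, c.σ_x, c.σ_y, map_sub]
  ring

theorem D_algebraMap (a : k) : c.D (algebraMap k A a) = 0 :=
  c.isLeftRegular_x (by simp [c.x_mul_D])

theorem D_lin (v : k × k) : c.D (c.lin v) = algebraMap k A (pairing δ v) := by
  refine c.isLeftRegular_x ?_
  simp only [c.x_mul_D, σ_lin]
  simp only [lin, reflCoeff, pairing, map_sub, map_mul, map_ofNat]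
  ring

theorem D_mul (f g : A) : c.D (f * g) = c.D f * g + c.σ f * c.D g := by
  refine c.isLeftRegular_x ?_
  simp only [mul_add, ← mul_assoc, c.x_mul_D, mul_comm c.x (c.σ f), map_mul]
  simp only [mul_assoc, c.x_mul_D]
  ring

theorem D_lin_mul (v : k × k) (f : A) :
    c.D (c.lin v * f) = c.lin (reflCoeff δ v) * c.D f + pairing δ v • f := by
  rw [D_mul, D_lin, σ_lin, Algebra.smul_def, add_comm]

theorem σ_D (f : A) : c.σ (c.D f) = c.D f := by
  refine c.isLeftRegular_x ?_
  have h := congrArg c.σ (c.x_mul_D f)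
  rw [map_mul, c.σ_x, map_sub, σ_σ] at h
  simp only [c.x_mul_D]
  linear_combination -h

theorem D_D (f : A) : c.D (c.D f) = 0 :=
  c.isLeftRegular_x (by simp [c.x_mul_D, σ_D])

theorem P_succ (n : ℕ) : c.P (n + 1) = c.D ∘ₗ c.swap.P n := rfl

theorem D_P_succ (n : ℕ) (f : A) : c.D (c.P (n + 1) f) = 0 := c.D_D _

end Basic

theorem P_succ_one : ∀ (c : DemazurePair k A δ) (n : ℕ), c.P (n + 1) 1 = 0
  | c, 0 => by simpa [P, altComp] using c.D_algebraMap 1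
  | c, n + 1 => by rw [P_succ, LinearMap.comp_apply, P_succ_one c.swap n, map_zero]

theorem eq_zero_of_map_lin_mul (c : DemazurePair k A δ) (T : A →ₗ[k] A) (h1 : T 1 = 0)
    (hT : ∀ v p, T p = 0 → T (c.lin v * p) = 0) : T = 0 := by
  have hker := Submodule.eq_top_of_one_mem_of_mul_mem c.adjoin_eq_top (LinearMap.ker T) h1 ?_
  · exact LinearMap.ker_eq_top.1 hker
  · rintro a (rfl | rfl) p hp
    · simpa [lin] using hT (1, 0) p hp
    · simpa [lin] using hT (0, 1) p hp

theorem P_two_lin_mul (c : DemazurePair k A δ) (u : k × k) (p : A) :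
    c.P 2 (c.lin u * p) = c.lin (rootCoeff δ 1 u) * c.P 2 p
      + pairing δ (rootCoeff δ 0 u).swap • c.swap.P 1 p + pairing δ u.swap • c.P 1 p := by
  change c.D (c.swap.D (c.lin u * p)) = c.lin _ * c.D (c.E p) + _ • c.E p + _ • c.D p
  rw [lin_eq_swap_lin, D_lin_mul, swap_lin, reflCoeff_swap, map_add, map_smul, D_lin_mul,
    reflCoeff_rootCoeff_swap]
  rfl

theorem P_add_two_lin_mul (m : ℕ) : ∀ (c : DemazurePair k A δ) (u : k × k) (p : A),
    c.P (m + 2) (c.lin (Prod.swap^[m] u) * p) = c.lin (rootCoeff δ (m + 1) u) * c.P (m + 2) p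
      + pairing δ (rootCoeff δ m u).swap • c.swap.P (m + 1) p
      + pairing δ u.swap • c.P (m + 1) p := by
  induction m with
  | zero => exact P_two_lin_mul
  | succ m ih =>
    intro c u p
    have hlin : c.lin (Prod.swap^[m + 1] u) = c.swap.lin (Prod.swap^[m] u) := by
      rw [swap_lin, Function.iterate_succ_apply']
    rw [P_succ, LinearMap.comp_apply, hlin, ih c.swap u p, swap_lin, map_add, map_add, map_smul,
      map_smul, D_lin_mul, reflCoeff_rootCoeff_swap, swap_swap, D_P_succ, smul_zero, add_zero]
    rfl

theorem smul_P_eq_qn_smul_swap_P (c : DemazurePair k A δ) {μ : k} {m : ℕ}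
    (hμ : μ * qn δ (m + 2) = 0) :
    μ • c.P (m + 2) = (μ * qn δ (m + 1)) • c.swap.P (m + 2) := by
  rw [← sub_eq_zero]
  refine c.eq_zero_of_map_lin_mul _ (by simp [P_succ_one]) fun v p hp ↦ ?_
  obtain ⟨u, rfl⟩ := Prod.swap_surjective.iterate m v
  have hQ := P_add_two_lin_mul m c.swap u.swap p
  rw [swap_lin, ← Function.Commute.self_iterate Prod.swap m, Prod.swap_swap, swap_swap,
    swap_lin] at hQ
  have hroot : algebraMap k A μ * c.lin (rootCoeff δ (m + 1) u.swap).swap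
      = algebraMap k A μ * c.lin (rootCoeff δ (m + 1) u) := by
    rw [← lin_smul, ← lin_smul, smul_rootCoeff_swap_swap hμ]
  have hQc := congrArg (algebraMap k A) (mul_pairing_rootCoeff_swap hμ u)
  have hPc := congrArg (algebraMap k A) (mul_pairing_rootCoeff_swap hμ u.swap)
  have hsq := congrArg (algebraMap k A) (qn_add_one_sq δ m)
  have hμ' := congrArg (algebraMap k A) hμ
  rw [LinearMap.sub_apply, LinearMap.smul_apply, LinearMap.smul_apply] at hp ⊢
  rw [P_add_two_lin_mul, hQ]
  simp only [Algebra.smul_def, map_mul, map_add, map_one, map_pow, map_zero, Prod.swap_swap]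
    at hQc hPc hsq hμ' hp ⊢
  linear_combination c.lin (rootCoeff δ (m + 1) u) * hp
    - algebraMap k A (qn δ (m + 1)) * c.swap.P (m + 2) p * hroot + c.swap.P (m + 1) p * hQc
    - algebraMap k A (qn δ (m + 1)) * c.P (m + 1) p * hPc
    - algebraMap k A μ * algebraMap k A (pairing δ u.swap) * c.P (m + 1) p * hsq
    - algebraMap k A (pairing δ u.swap) * algebraMap k A (qn δ m) * c.P (m + 1) p * hμ'

theorem smul_P_eq_zero (c : DemazurePair k A δ) {μ : k} {n : ℕ} (hμ : μ * qn δ (n + 1) = 0) :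
    μ • c.P (n + 2) = 0 := by
  cases n with
  | zero => simp_all [qn]
  | succ n =>
    ext f
    have h := LinearMap.congr_fun (c.swap.smul_P_eq_qn_smul_swap_P hμ) f
    rw [LinearMap.smul_apply, P_succ, LinearMap.comp_apply, ← map_smul, ← LinearMap.smul_apply, h,
      LinearMap.smul_apply, map_smul, swap_swap, D_P_succ, smul_zero, LinearMap.zero_apply]

theorem smul_P_eq_zero_of_le {ν : k} {n m : ℕ} (h : ∀ c : DemazurePair k A δ, ν • c.P n = 0)
    (hnm : n ≤ m) (c : DemazurePair k A δ) : ν • c.P m = 0 := by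
  induction m, hnm using Nat.le_induction generalizing c with
  | base => exact h c
  | succ m _ ih => rw [P_succ, ← LinearMap.comp_smul, ih c.swap, LinearMap.comp_zero]

theorem smul_P_eq_smul_swap_P_of_even (c : DemazurePair k A δ) {μ : k} {j : ℕ}
    (hμ : μ * qn δ (2 * j + 2) = 0) : μ • c.P (2 * j + 2) = μ • c.swap.P (2 * j + 2) := by
  have hν : μ * (qn δ (2 * j + 1) - 1) * qn δ (j + 1) = 0 := by
    linear_combination μ * qn_add_one_mul_qn_two_mul_add_one_sub_one δ j + qn δ j * hμ
  have hvan := smul_P_eq_zero_of_le (fun c ↦ c.smul_P_eq_zero hν) (by omega : j + 2 ≤ 2 * j + 2)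
    c.swap
  calc μ • c.P (2 * j + 2) = (μ * qn δ (2 * j + 1)) • c.swap.P (2 * j + 2) :=
        c.smul_P_eq_qn_smul_swap_P hμ
    _ = μ • c.swap.P (2 * j + 2) + (μ * (qn δ (2 * j + 1) - 1)) • c.swap.P (2 * j + 2) := by
        rw [← add_smul]; ring_nf
    _ = μ • c.swap.P (2 * j + 2) := by rw [hvan, add_zero]

end DemazurePair

theorem MvPolynomial.adjoin_X_zero_X_one (R : Type*) [CommRing R] :
    Algebra.adjoin R {(X 0 : MvPolynomial (Fin 2) R), X 1} = ⊤ := by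
  rw [← adjoin_range_X]
  congr 1
  ext
  simp [Fin.exists_fin_two, eq_comm]

theorem X_zero_dvd_sub_σs {k : Type*} [CommRing k] (δ : k) (f : MvPolynomial (Fin 2) k) :
    X 0 ∣ f - σs δ f := by
  refine dvd_sub_apply_of_adjoin_eq_top (MvPolynomial.adjoin_X_zero_X_one k) _ ?_ f
  rintro a (rfl | rfl)
  · exact ⟨2, by simp [σs]; ring⟩
  · exact ⟨-C δ, by simp [σs, mul_comm]⟩

theorem X_one_dvd_sub_σt {k : Type*} [CommRing k] (δ : k) (f : MvPolynomial (Fin 2) k) :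
    X 1 ∣ f - σt δ f := by
  refine dvd_sub_apply_of_adjoin_eq_top (MvPolynomial.adjoin_X_zero_X_one k) _ ?_ f
  rintro a (rfl | rfl)
  · exact ⟨-C δ, by simp [σt, mul_comm]⟩
  · exact ⟨2, by simp [σt]; ring⟩

noncomputable def DemazurePair.mvPolynomial {k : Type*} [CommRing k] (δ : k)
    (Ds Dt : MvPolynomial (Fin 2) k →ₗ[k] MvPolynomial (Fin 2) k)
    (hs : ∀ f, X 0 * Ds f = f - σs δ f) (ht : ∀ f, X 1 * Dt f = f - σt δ f) :
    DemazurePair k (MvPolynomial (Fin 2) k) δ where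
  x := X 0
  y := X 1
  σ := σs δ
  τ := σt δ
  D := Ds
  E := Dt
  adjoin_eq_top := MvPolynomial.adjoin_X_zero_X_one k
  isLeftRegular_x := isRegular_X.left
  isLeftRegular_y := isRegular_X.left
  σ_x := by simp [σs]
  σ_y := by simp [σs, algebraMap_eq]
  τ_y := by simp [σt]
  τ_x := by simp [σt, algebraMap_eq]
  x_mul_D := hs
  y_mul_E := ht

/-- There exist unique `k`-linear simple Demazure operators `Ds, Dt : R → R` with
`αs·Ds(f) = f − σs(f)` and `αt·Dt(f) = f − σt(f)`.  Moreover, if `m ≥ 2` and `[m] = 0`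
in `k`, then for `m` even the two alternating compositions of length `m` agree
(`Ds ∘ Dt ∘ ⋯ ∘ Dt = Dt ∘ Ds ∘ ⋯ ∘ Ds`), and for `m` odd one has
`Ds ∘ Dt ∘ ⋯ ∘ Ds = [m−1] · (Dt ∘ Ds ∘ ⋯ ∘ Dt)`. -/
theorem demazure_exists_unique_and_braid {k : Type*} [CommRing k] (δ : k) :
    ((∃! Ds : MvPolynomial (Fin 2) k →ₗ[k] MvPolynomial (Fin 2) k,
        ∀ f, X 0 * Ds f = f - σs δ f) ∧
     (∃! Dt : MvPolynomial (Fin 2) k →ₗ[k] MvPolynomial (Fin 2) k,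
        ∀ f, X 1 * Dt f = f - σt δ f)) ∧
    (∀ (Ds Dt : MvPolynomial (Fin 2) k →ₗ[k] MvPolynomial (Fin 2) k),
      (∀ f, X 0 * Ds f = f - σs δ f) → (∀ f, X 1 * Dt f = f - σt δ f) →
      ∀ m : ℕ, 2 ≤ m → qn δ m = 0 →
        (Even m → altComp Ds Dt m = altComp Dt Ds m) ∧
        (Odd m → altComp Ds Dt m = qn δ (m - 1) • altComp Dt Ds m)) := by
  refine ⟨⟨existsUnique_linearMap_mul_eq isRegular_X.left (.id - (σs δ).toLinearMap)
      (X_zero_dvd_sub_σs δ),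
    existsUnique_linearMap_mul_eq isRegular_X.left (.id - (σt δ).toLinearMap)
      (X_one_dvd_sub_σt δ)⟩, ?_⟩
  intro Ds Dt hs ht m hm hq
  let c := DemazurePair.mvPolynomial δ Ds Dt hs ht
  obtain ⟨n, rfl⟩ := Nat.exists_eq_add_of_le' hm
  refine ⟨fun heven ↦ ?_, fun _ ↦ ?_⟩
  · obtain ⟨j, rfl⟩ : ∃ j, n = 2 * j := ((Nat.even_add.1 heven).2 even_two).two_dvd
    have h := c.smul_P_eq_smul_swap_P_of_even (μ := 1) (by simpa using hq)
    rwa [one_smul, one_smul] at h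
  · have h := c.smul_P_eq_qn_smul_swap_P (μ := 1) (by simpa using hq)
    rwa [one_smul, one_mul] at h
end

section
/- Suppose α ∈ R lies in the k-span of αs and αt and satisfies α − σs(α) = αs (i.e. Ds(α) = 1, Demazure surjectivity). Then every f ∈ R can be written uniquely as f = g + h·α with g and h fixed by σs; equivalently, R is a free module of rank 2 over the subring R^s of σs-invariants, with basis {1, α}. -/
open MvPolynomial

lemma σs_X0 {k : Type*} [CommRing k] (δ : k) : σs δ (X 0) = -(X 0) := by
  simp [σs]

lemma σs_X1 {k : Type*} [CommRing k] (δ : k) : σs δ (X 1) = X 1 + C δ * X 0 := by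
  simp [σs]

lemma σs_invol {k : Type*} [CommRing k] (δ : k) (p : MvPolynomial (Fin 2) k) :
    σs δ (σs δ p) = p := by
  have : (σs δ).comp (σs δ) = AlgHom.id k (MvPolynomial (Fin 2) k) := by
    apply MvPolynomial.algHom_ext
    intro i
    fin_cases i <;> simp [σs] <;> ring
  calc σs δ (σs δ p) = ((σs δ).comp (σs δ)) p := rfl
    _ = p := by rw [this]; rfl

lemma X0_dvd_sub {k : Type*} [CommRing k] (δ : k) (f : MvPolynomial (Fin 2) k) :
    (X 0 : MvPolynomial (Fin 2) k) ∣ f - σs δ f := by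
  induction f using MvPolynomial.induction_on with
  | C a => simp [σs]
  | add p q hp hq =>
      have : p + q - σs δ (p + q) = (p - σs δ p) + (q - σs δ q) := by
        rw [map_add]; ring
      rw [this]; exact dvd_add hp hq
  | mul_X p i hp =>
      have key : p * X i - σs δ (p * X i)
          = (p - σs δ p) * X i + σs δ p * (X i - σs δ (X i)) := by
        rw [map_mul]; ring
      rw [key]
      refine dvd_add (Dvd.dvd.mul_right hp _) (Dvd.dvd.mul_left ?_ _)
      fin_cases i
      · exact ⟨2, by simp [σs]; ring⟩
      · exact ⟨-(C δ), by simp [σs]; ring⟩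

/-- If `α` lies in the `k`-span of `αs` and `αt` and satisfies `α − σs(α) = αs`
(Demazure surjectivity), then every `f ∈ R` can be written uniquely as `f = g + h·α`
with `g` and `h` fixed by `σs`; i.e. `R` is free of rank `2` over `R^s` with
basis `{1, α}`. -/
theorem free_of_rank_two_over_invariants {k : Type*} [CommRing k] (δ : k)
    (α : MvPolynomial (Fin 2) k)
    (hspan : α ∈ Submodule.span k ({X 0, X 1} : Set (MvPolynomial (Fin 2) k)))
    (hα : α - σs δ α = X 0) :
    ∀ f : MvPolynomial (Fin 2) k,
      ∃! p : MvPolynomial (Fin 2) k × MvPolynomial (Fin 2) k,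
        σs δ p.1 = p.1 ∧ σs δ p.2 = p.2 ∧ f = p.1 + p.2 * α := by
  intro f
  have hreg : Function.Injective fun a : MvPolynomial (Fin 2) k => X (0 : Fin 2) * a :=
    (isRegular_X (n := (0 : Fin 2)) (R := k)).left
  obtain ⟨h, hh⟩ := X0_dvd_sub δ f
  -- σs h = h
  have hfix : σs δ h = h := by
    apply hreg
    have h1 : σs δ (f - σs δ f) = -(X 0 * h) := by
      rw [map_sub, σs_invol, ← hh]; ring
    have h2 : σs δ (f - σs δ f) = -(X 0) * σs δ h := by
      rw [hh, map_mul, σs_X0]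
    simp only [neg_mul] at h2
    have := h1.symm.trans h2
    exact (neg_injective this).symm
  set g := f - h * α with hg
  have hσα : σs δ α = α - X 0 := by linear_combination -hα
  have hgfix : σs δ g = g := by
    rw [hg, map_sub, map_mul, hfix, hσα]
    have : σs δ f = f - X 0 * h := by linear_combination -hh
    rw [this]; ring
  refine ⟨(g, h), ⟨hgfix, hfix, by rw [hg]; ring⟩, ?_⟩
  rintro ⟨g', h'⟩ ⟨hg', hh', hf'⟩
  have hh'' : h' = h := by
    apply hreg
    have e1 : σs δ f = g' + h' * (α - X 0) := by
      rw [hf', map_add, map_mul, hg', hh', hσα]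
    have e2 : f - σs δ f = h' * X 0 := by linear_combination hf' - e1
    show X 0 * h' = X 0 * h
    linear_combination hh - e2
  have : g' = g := by
    rw [hg]; rw [hf', hh'']; ring
  simp [this, hh'']
end

section
/- Suppose k is an integral domain of characteristic zero and δ = 2 in k. Then the subring of k[αs, αt] consisting of polynomials fixed by both σs and σt is exactly the k-subalgebra generated by the single linear element αs + αt. -/
/-!
For `δ = 2` both involutions fix `u = αs + αt`. In the coordinates `x = αs`, `u` they act on
`k[u][x]` by `x ↦ -x` and `x ↦ 2u - x`, so their composite is the translation `x ↦ x + 2u`.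
Over a domain of characteristic zero a polynomial invariant under a nonzero translation is
constant, so an invariant lies in `k[u]`.
-/

open MvPolynomial

namespace Polynomial

variable {A : Type*} [CommRing A] [IsDomain A] [CharZero A] {p : A[X]} {c : A}

theorem eq_C_of_periodic (hc : c ≠ 0) (hp : Function.Periodic p.eval c) :
    p = C (p.eval 0) := by
  have hinj : Function.Injective (fun n : ℕ => (n : A) * c) := fun m n hmn =>
    Nat.cast_injective (mul_right_cancel₀ hc hmn)
  refine p.eq_of_infinite_eval_eq _ (Set.infinite_of_injective_forall_mem hinj fun n => ?_)
  simpa using hp.nat_mul_eq n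

theorem eq_C_of_comp_X_add_C_eq (hc : c ≠ 0) (hp : p.comp (X + C c) = p) :
    p = C (p.eval 0) :=
  eq_C_of_periodic hc fun x => by
    simpa only [eval_comp, eval_add, eval_X, eval_C] using congrArg (eval x) hp

end Polynomial

section CoordinateChange

variable {k : Type*} [CommRing k]

/-- The coordinates `x = αs` (outer variable) and `u = αs + αt` (inner variable). -/
noncomputable def coordChange : MvPolynomial (Fin 2) k →ₐ[k] Polynomial (Polynomial k) :=
  aeval ![Polynomial.X, Polynomial.C Polynomial.X - Polynomial.X]

noncomputable def coordChangeInv : Polynomial (Polynomial k) →ₐ[k] MvPolynomial (Fin 2) k :=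
  ((Polynomial.aeval (R := MvPolynomial (Fin 2) k) (X 0)).restrictScalars k).comp
    (Polynomial.mapAlgHom (Polynomial.aeval (X 0 + X 1)))

theorem coordChangeInv_comp_coordChange :
    (coordChangeInv (k := k)).comp coordChange = AlgHom.id k _ := by
  apply MvPolynomial.algHom_ext
  intro i
  fin_cases i <;> simp [coordChange, coordChangeInv]

theorem coordChangeInv_C (a : Polynomial k) :
    coordChangeInv (Polynomial.C a) = Polynomial.aeval (X 0 + X 1 : MvPolynomial (Fin 2) k) a := by
  simp [coordChangeInv]

theorem coordChange_comp_σs_comp_σt_two :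
    (coordChange (k := k)).comp ((σs 2).comp (σt 2)) =
      ((Polynomial.aeval (Polynomial.X + Polynomial.C (2 * Polynomial.X))).restrictScalars k).comp
        coordChange := by
  apply MvPolynomial.algHom_ext
  intro i
  fin_cases i <;>
    simp [coordChange, σs, σt, Polynomial.aeval_def, map_ofNat] <;> ring

end CoordinateChange

theorem σs_two_X_zero_add_X_one {k : Type*} [CommRing k] :
    σs (2 : k) (X 0 + X 1) = X 0 + X 1 := by
  simp [σs, map_ofNat]; ring

theorem σt_two_X_zero_add_X_one {k : Type*} [CommRing k] :
    σt (2 : k) (X 0 + X 1) = X 0 + X 1 := by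
  simp [σt, map_ofNat]; ring

/-- If `k` is an integral domain of characteristic zero and `δ = 2`, then the subring of
`k[αs, αt]` of polynomials fixed by both `σs` and `σt` is exactly the `k`-subalgebra
generated by the single linear element `αs + αt`. -/
theorem dihedral_invariants_delta_two {k : Type*} [CommRing k] [IsDomain k] [CharZero k]
    (δ : k) (hδ : δ = 2) :
    ∀ f : MvPolynomial (Fin 2) k,
      (σs δ f = f ∧ σt δ f = f) ↔
        f ∈ Algebra.adjoin k ({X 0 + X 1} : Set (MvPolynomial (Fin 2) k)) := by
  subst hδ
  intro f
  constructor
  · rintro ⟨hs, ht⟩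
    have htranslate : (coordChange f).comp (Polynomial.X + Polynomial.C (2 * Polynomial.X)) =
        coordChange f := by
      simpa [hs, ht, Polynomial.comp_eq_aeval] using
        (DFunLike.congr_fun coordChange_comp_σs_comp_σt_two f).symm
    have hc : (2 * Polynomial.X : Polynomial k) ≠ 0 :=
      mul_ne_zero two_ne_zero Polynomial.X_ne_zero
    have hconst := Polynomial.eq_C_of_comp_X_add_C_eq hc htranslate
    have hf : f = coordChangeInv (coordChange f) :=
      (DFunLike.congr_fun coordChangeInv_comp_coordChange f).symm
    rw [hf, hconst, coordChangeInv_C, Algebra.adjoin_singleton_eq_range_aeval]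
    exact ⟨_, rfl⟩
  · intro hf
    exact ⟨Algebra.adjoin_singleton_le (S := AlgHom.equalizer _ (AlgHom.id k _))
        σs_two_X_zero_add_X_one hf,
      Algebra.adjoin_singleton_le (S := AlgHom.equalizer _ (AlgHom.id k _))
        σt_two_X_zero_add_X_one hf⟩
end

section
/- Let k be a commutative ring with δ ∈ k, let m ≥ 2, and suppose [m] = 0 and [j] is invertible in k for every 1 ≤ j ≤ m−1. Then Π_{j=1}^{m−1} [⌈j/2⌉]·[j]^{−1} = [m−1]^{⌊(m−1)/2⌋}. (This is the invertible scalar by which the associated polynomial of the Jones–Wenzl projector JW_{m−1} differs from the product of the m positive roots; in the balanced case [m−1] = 1 it equals 1.) -/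
/-!
Put `n = m - 1` and `c = [n]`. Since `[n+1] = 0`, the sequences `j ↦ [n+1-j]` and
`j ↦ c·[j]` satisfy the same two-term recursion with the same initial values, so
`[n+1-j] = c·[j]`; at `j = n` this gives `c² = 1`. Hence the quantum factorial satisfies
`[n]! = c^s·[s]!·[t]!` whenever `s + t = n`. The numerator `Π [⌈j/2⌉]` is
`[⌈n/2⌉]!·[⌊n/2⌋]!`, so the product is `c^{-⌈n/2⌉} = c^{⌈n/2⌉}`. For odd
`n = 2r+1` the reflection at `j = r+1` gives `[r+1] = c·[r+1]`, so `c = 1` and the exponent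
may be replaced by `⌊n/2⌋`.
-/

namespace QuantumNumber

variable {k : Type*} [CommRing k] (δ : k)

def qfact (n : ℕ) : k := ∏ i ∈ Finset.Icc 1 n, qn δ i

theorem qn_add_two (n : ℕ) : qn δ (n + 2) = δ * qn δ (n + 1) - qn δ n := rfl

theorem qfact_succ (n : ℕ) : qfact δ (n + 1) = qfact δ n * qn δ (n + 1) :=
  Finset.prod_Icc_succ_top (Nat.le_add_left 1 n) _

variable {δ}

theorem qn_sub_eq_mul {n : ℕ} (h : qn δ (n + 1) = 0) :
    ∀ j ≤ n + 1, qn δ (n + 1 - j) = qn δ n * qn δ j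
  | 0, _ => by simpa [qn] using h
  | 1, _ => by simp [qn]
  | j + 2, hj => by
      have h₁ := qn_sub_eq_mul h (j + 1) (by omega)
      have h₂ := qn_sub_eq_mul h j (by omega)
      rw [show n + 1 - (j + 1) = n + 1 - (j + 2) + 1 by omega] at h₁
      rw [show n + 1 - j = n + 1 - (j + 2) + 2 by omega, qn_add_two] at h₂
      rw [qn_add_two]
      linear_combination δ * h₁ - h₂

theorem qn_mul_self_eq_one {n : ℕ} (h : qn δ (n + 1) = 0) : qn δ n * qn δ n = 1 := by
  have := qn_sub_eq_mul h n (Nat.le_succ n)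
  rwa [Nat.add_sub_cancel_left, show qn δ 1 = 1 from rfl, eq_comm] at this

theorem qn_eq_one_of_odd {r : ℕ} (h : qn δ (2 * r + 2) = 0) (hu : IsUnit (qn δ (r + 1))) :
    qn δ (2 * r + 1) = 1 := by
  have := qn_sub_eq_mul h (r + 1) (by omega)
  rw [show 2 * r + 1 + 1 - (r + 1) = r + 1 by omega] at this
  exact hu.mul_eq_right.mp this.symm

theorem qfact_eq_pow_mul_qfact_mul_qfact {n : ℕ} (h : qn δ (n + 1) = 0) :
    ∀ s t, s + t = n → qfact δ n = qn δ n ^ s * qfact δ s * qfact δ t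
  | 0, t, hst => by simp [qfact, ← hst]
  | s + 1, t, hst => by
      have hrefl := qn_sub_eq_mul h (s + 1) (by omega)
      rw [show n + 1 - (s + 1) = t + 1 by omega] at hrefl
      rw [qfact_eq_pow_mul_qfact_mul_qfact h s (t + 1) (by omega), qfact_succ, qfact_succ,
        hrefl]
      ring

end QuantumNumber

theorem Finset.prod_Icc_succ_div_two {M : Type*} [CommMonoid M] (f : ℕ → M) :
    ∀ n, ∏ j ∈ Icc 1 n, f ((j + 1) / 2) =
      (∏ i ∈ Icc 1 ((n + 1) / 2), f i) * ∏ i ∈ Icc 1 (n / 2), f i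
  | 0 => by simp
  | n + 1 => by
      rw [prod_Icc_succ_top (by omega), prod_Icc_succ_div_two f n]
      rcases Nat.even_or_odd n with ⟨r, rfl⟩ | ⟨r, rfl⟩
      · rw [show (r + r + 1 + 1) / 2 = r + 1 by omega, show (r + r + 1) / 2 = r by omega,
          show (r + r) / 2 = r by omega, prod_Icc_succ_top (by omega), mul_right_comm]
      · rw [show (2 * r + 1 + 1 + 1) / 2 = r + 1 by omega,
          show (2 * r + 1 + 1) / 2 = r + 1 by omega, show (2 * r + 1) / 2 = r by omega,
          prod_Icc_succ_top (by omega), mul_assoc]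

open QuantumNumber in
theorem jones_wenzl_scalar_general {k : Type*} [CommRing k] (δ : k) (m : ℕ)
    (h0 : qn δ m = 0)
    (inv : ℕ → k) (hinv : ∀ j : ℕ, 1 ≤ j → j ≤ m - 1 → qn δ j * inv j = 1) :
    ∏ j ∈ Finset.Icc 1 (m - 1), qn δ ((j + 1) / 2) * inv j =
      qn δ (m - 1) ^ ((m - 1) / 2) := by
  obtain _ | n := m
  · simp
  simp only [Nat.add_sub_cancel] at hinv ⊢
  have hinv_prod : qfact δ n * ∏ j ∈ Finset.Icc 1 n, inv j = 1 := by
    rw [qfact, ← Finset.prod_mul_distrib]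
    refine Finset.prod_eq_one fun j hj => ?_
    exact hinv j (Finset.mem_Icc.mp hj).1 (Finset.mem_Icc.mp hj).2
  have hfact := qfact_eq_pow_mul_qfact_mul_qfact h0 ((n + 1) / 2) (n / 2) (by omega)
  have hc : qn δ n ^ ((n + 1) / 2) * qn δ n ^ ((n + 1) / 2) = 1 := by
    rw [← mul_pow, qn_mul_self_eq_one h0, one_pow]
  have hprod :
      (∏ j ∈ Finset.Icc 1 n, qn δ ((j + 1) / 2) * inv j) * qn δ n ^ ((n + 1) / 2) = 1 := by
    rw [Finset.prod_mul_distrib, Finset.prod_Icc_succ_div_two, ← hinv_prod, hfact, qfact, qfact]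
    ring
  rw [left_inv_eq_right_inv hprod hc]
  rcases Nat.even_or_odd n with ⟨r, rfl⟩ | ⟨r, rfl⟩
  · rw [show (r + r + 1) / 2 = (r + r) / 2 by omega]
  · have hu : IsUnit (qn δ (r + 1)) := IsUnit.of_mul_eq_one _ (hinv (r + 1) (by omega) (by omega))
    rw [qn_eq_one_of_odd h0 hu, one_pow, one_pow]

/-- Suppose `m ≥ 2`, `[m] = 0` and each `[j]` for `1 ≤ j ≤ m−1` is invertible, with
inverse `inv j`.  Then `Π_{j=1}^{m−1} [⌈j/2⌉]·[j]⁻¹ = [m−1]^{⌊(m−1)/2⌋}`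
(the scalar relating the associated polynomial of `JW_{m−1}` to the product of the
`m` positive roots). -/
theorem jones_wenzl_scalar {k : Type*} [CommRing k] (δ : k) (m : ℕ)
    (hm : 2 ≤ m) (h0 : qn δ m = 0)
    (inv : ℕ → k) (hinv : ∀ j : ℕ, 1 ≤ j → j ≤ m - 1 → qn δ j * inv j = 1) :
    ∏ j ∈ Finset.Icc 1 (m - 1), qn δ ((j + 1) / 2) * inv j =
      qn δ (m - 1) ^ ((m - 1) / 2) :=
  jones_wenzl_scalar_general δ m h0 inv hinv
end
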